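/- arXiv:1409.5059 — 4 statements merged into one kernel-verified Lean document; each statement's English description precedes it below -/
import Mathlib

section
/- Let M = Fin 7, with U0 = {0,1,2}, U1 = {3,4}, U2 = {5,6}. Let S = {(0,1),(1,2),(2,0)} ⊆ M × M and R = {(a,b,c) ∈ U0 × U1 × U2 : (a = 0 ∧ b + c even) ∨ (a ∈ {1,2} ∧ b + c odd)}. Then every bijection g : M → M that preserves R (i.e. (a,b,c) ∈ R ↔ (g a, g b, g c) ∈ R) and preserves S fixes the element 0. -/
def U0 : Set (Fin 7) := {0, 1, 2}
def U1 : Set (Fin 7) := {3, 4}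
def U2 : Set (Fin 7) := {5, 6}

def S : Set (Fin 7 × Fin 7) := {(0, 1), (1, 2), (2, 0)}

def R : Set (Fin 7 × Fin 7 × Fin 7) :=
  {p | p.1 ∈ U0 ∧ p.2.1 ∈ U1 ∧ p.2.2 ∈ U2 ∧
    ((p.1 = 0 ∧ Even ((p.2.1 : ℕ) + (p.2.2 : ℕ))) ∨
     (p.1 ∈ ({1, 2} : Set (Fin 7)) ∧ Odd ((p.2.1 : ℕ) + (p.2.2 : ℕ))))}

theorem stmt_6 (g : Fin 7 → Fin 7) (hg : Function.Bijective g)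
    (hR : ∀ a b c, (a, b, c) ∈ R ↔ (g a, g b, g c) ∈ R)
    (hS : ∀ a b, (a, b) ∈ S ↔ (g a, g b) ∈ S) :
    g 0 = 0 := by
  have h01 := (hS 0 1).mp (by simp [S])
  have h12 := (hS 1 2).mp (by simp [S])
  simp only [S, Set.mem_insert_iff, Set.mem_singleton_iff, Prod.mk.injEq] at h01 h12
  have r05 := (hR 0 3 5).mp
    ⟨by simp [U0], by simp [U1], by simp [U2], Or.inl ⟨rfl, by decide⟩⟩
  have r16 := (hR 1 3 6).mp
    ⟨by simp [U0], by simp [U1], by simp [U2], Or.inr ⟨by simp, by decide⟩⟩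
  have r26 := (hR 2 3 6).mp
    ⟨by simp [U0], by simp [U1], by simp [U2], Or.inr ⟨by simp, by decide⟩⟩
  rcases h01 with ⟨e0, e1⟩ | ⟨e0, e1⟩ | ⟨e0, e1⟩
  · exact e0
  · -- g 0 = 1, g 1 = 2
    exfalso
    obtain ⟨-, hb3, hc5, hp5⟩ := r05
    obtain ⟨-, -, hc6, hp6⟩ := r16
    have hodd5 : Odd ((g 3 : ℕ) + (g 5 : ℕ)) := by
      rcases hp5 with ⟨h, -⟩ | ⟨-, h⟩
      · rw [e0] at h; exact absurd (show (1:Fin 7) = 0 from h) (by decide)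
      · exact h
    have hodd6 : Odd ((g 3 : ℕ) + (g 6 : ℕ)) := by
      rcases hp6 with ⟨h, -⟩ | ⟨-, h⟩
      · rw [e1] at h; exact absurd (show (2:Fin 7) = 0 from h) (by decide)
      · exact h
    simp only [U1, U2, Set.mem_insert_iff, Set.mem_singleton_iff] at hb3 hc5 hc6
    rcases hc5 with h5 | h5 <;> rcases hc6 with h6 | h6
    · have := hg.1 (h5.trans h6.symm); exact absurd this (by decide)
    · rcases hb3 with h3 | h3
      · rw [h3, h5] at hodd5; exact absurd hodd5 (by decide)
      · rw [h3, h6] at hodd6; exact absurd hodd6 (by decide)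
    · rcases hb3 with h3 | h3
      · rw [h3, h6] at hodd6; exact absurd hodd6 (by decide)
      · rw [h3, h5] at hodd5; exact absurd hodd5 (by decide)
    · have := hg.1 (h5.trans h6.symm); exact absurd this (by decide)
  · -- g 0 = 2, g 1 = 0
    exfalso
    have e2 : g 2 = 1 := by
      rcases h12 with ⟨f1, f2⟩ | ⟨f1, f2⟩ | ⟨f1, f2⟩
      · exact f2
      · rw [e1] at f1; exact absurd f1 (by decide)
      · rw [e1] at f1; exact absurd f1 (by decide)
    obtain ⟨-, -, -, hp6⟩ := r16
    obtain ⟨-, -, -, hq6⟩ := r26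
    have heven : Even ((g 3 : ℕ) + (g 6 : ℕ)) := by
      rcases hp6 with ⟨-, h⟩ | ⟨h, -⟩
      · exact h
      · rw [e1] at h; exact absurd h (by simp)
    have hodd : Odd ((g 3 : ℕ) + (g 6 : ℕ)) := by
      rcases hq6 with ⟨h, -⟩ | ⟨-, h⟩
      · rw [e2] at h; exact absurd (show (1:Fin 7) = 0 from h) (by decide)
      · exact h
    exact (Nat.not_odd_iff_even.mpr heven) hodd
end

section
/- Let M = Fin 7, U0 = {0,1,2}, U1 = {3,4}, U2 = {5,6}, S = {(0,1),(1,2),(2,0)}, R as the canonical parity relation on U0 × U1 × U2. Define B as the collection of subsets of M³ consisting of: X(ijk,r) and X(ijk,−r) for each permutation (i,j,k) of (0,1,2) (the permuted copies of R and T∖R), and X(ijk,(e0,e1)) for each non-repetition-free triple (i,j,k) and each e0 ∈ Rel_{ij}, e1 ∈ Rel_{jk}, where Rel_{00} = {S, S⁻¹, id_{U0}}, Rel_{11} = {di_{U1}, id_{U1}}, Rel_{22} = {di_{U2}, id_{U2}}, Rel_{ij} = {U_i × U_j} for i ≠ j. Then B is a partition of M³ (the elements of B are nonempty, pairwise disjoint,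 and their union is M³). -/
/-- The inverse of `S`. -/
def Sinv : Set (Fin 7 × Fin 7) := {p | (p.2, p.1) ∈ S}

/-- Identity relation on a set. -/
def idOn (V : Set (Fin 7)) : Set (Fin 7 × Fin 7) := {p | p.1 ∈ V ∧ p.1 = p.2}

/-- Diversity relation on a set. -/
def diOn (V : Set (Fin 7)) : Set (Fin 7 × Fin 7) := {p | p.1 ∈ V ∧ p.2 ∈ V ∧ p.1 ≠ p.2}

/-- The sets `U_0, U_1, U_2`. -/
def U : Fin 3 → Set (Fin 7) := ![U0, U1, U2]

/-- The families `Rel_{ij}` of binary relations. -/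
def RelFam : Fin 3 → Fin 3 → Set (Set (Fin 7 × Fin 7)) := fun i j =>
  if i = 0 ∧ j = 0 then {S, Sinv, idOn U0}
  else if i = 1 ∧ j = 1 then {diOn U1, idOn U1}
  else if i = 2 ∧ j = 2 then {diOn U2, idOn U2}
  else {(U i) ×ˢ (U j)}

/-- `X(ijk, r)` (for `pos = true`) and `X(ijk, -r)` (for `pos = false`), for `ijk`
a permutation of `012`: the permuted copies of `R` and of `T \ R`. -/
def Xperm (i j k : Fin 3) (pos : Bool) : Set (Fin 7 × Fin 7 × Fin 7) :=
  {t | ∃ u : Fin 3 → Fin 7, u i = t.1 ∧ u j = t.2.1 ∧ u k = t.2.2 ∧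
        u 0 ∈ U0 ∧ u 1 ∈ U1 ∧ u 2 ∈ U2 ∧
        (if pos then (u 0, u 1, u 2) ∈ R else (u 0, u 1, u 2) ∉ R)}

/-- `X(ijk, (e0, e1))` for `ijk` not repetition-free. -/
def Xrel (i j k : Fin 3) (e0 e1 : Set (Fin 7 × Fin 7)) : Set (Fin 7 × Fin 7 × Fin 7) :=
  {t | t.1 ∈ U i ∧ t.2.1 ∈ U j ∧ t.2.2 ∈ U k ∧ (t.1, t.2.1) ∈ e0 ∧ (t.2.1, t.2.2) ∈ e1}

/-- The family `B` of blocks. -/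
def B : Set (Set (Fin 7 × Fin 7 × Fin 7)) :=
  {X | (∃ i j k : Fin 3, (i ≠ j ∧ i ≠ k ∧ j ≠ k) ∧ ∃ pos : Bool, X = Xperm i j k pos) ∨
       (∃ i j k : Fin 3, ¬(i ≠ j ∧ i ≠ k ∧ j ≠ k) ∧
          ∃ e0 ∈ RelFam i j, ∃ e1 ∈ RelFam j k, X = Xrel i j k e0 e1)}

-- auxiliary

instance : DecidablePred (· ∈ U0) := fun p => inferInstanceAs (Decidable (p = 0 ∨ p = 1 ∨ p = 2))
instance : DecidablePred (· ∈ U1) := fun p => inferInstanceAs (Decidable (p = 3 ∨ p = 4))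
instance : DecidablePred (· ∈ U2) := fun p => inferInstanceAs (Decidable (p = 5 ∨ p = 6))
instance : DecidablePred (· ∈ S) := fun p => inferInstanceAs (Decidable (p = (0,1) ∨ p = (1,2) ∨ p = (2,0)))
instance : DecidablePred (· ∈ Sinv) := fun p => inferInstanceAs (Decidable ((p.2, p.1) ∈ S))
instance : DecidablePred (· ∈ R) := fun p =>
  inferInstanceAs (Decidable (p.1 ∈ U0 ∧ p.2.1 ∈ U1 ∧ p.2.2 ∈ U2 ∧
    ((p.1 = 0 ∧ Even ((p.2.1 : ℕ) + (p.2.2 : ℕ))) ∨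
     ((p.1 = 1 ∨ p.1 = 2) ∧ Odd ((p.2.1 : ℕ) + (p.2.2 : ℕ))))))
instance (V : Set (Fin 7)) [DecidablePred (· ∈ V)] : DecidablePred (· ∈ idOn V) :=
  fun p => inferInstanceAs (Decidable (p.1 ∈ V ∧ p.1 = p.2))
instance (V : Set (Fin 7)) [DecidablePred (· ∈ V)] : DecidablePred (· ∈ diOn V) :=
  fun p => inferInstanceAs (Decidable (p.1 ∈ V ∧ p.2 ∈ V ∧ p.1 ≠ p.2))
instance (i : Fin 3) : DecidablePred (· ∈ U i) := fun p =>
  match i with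
  | 0 => inferInstanceAs (Decidable (p ∈ U0))
  | 1 => inferInstanceAs (Decidable (p ∈ U1))
  | 2 => inferInstanceAs (Decidable (p ∈ U2))

/-- projection used to invert a permutation of coordinates -/
def pr (i j k m : Fin 3) (a b c : Fin 7) : Fin 7 :=
  if i = m then a else if j = m then b else c

lemma fin3_resolve : ∀ i j k m : Fin 3, i ≠ j → i ≠ k → j ≠ k → ¬i = m → ¬j = m → k = m := by
  intro i j k m
  fin_cases i <;> fin_cases j <;> fin_cases k <;> fin_cases m <;> simp

lemma exists_fun_iff {i j k : Fin 3} (hij : i ≠ j) (hik : i ≠ k) (hjk : j ≠ k)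
    (P : Fin 7 → Fin 7 → Fin 7 → Prop) (a b c : Fin 7) :
    (∃ u : Fin 3 → Fin 7, u i = a ∧ u j = b ∧ u k = c ∧ P (u 0) (u 1) (u 2)) ↔
      P (pr i j k 0 a b c) (pr i j k 1 a b c) (pr i j k 2 a b c) := by
  constructor
  · rintro ⟨u, rfl, rfl, rfl, h⟩
    have key : ∀ m, pr i j k m (u i) (u j) (u k) = u m := by
      intro m
      unfold pr
      split_ifs with h1 h2
      · rw [h1]
      · rw [h2]
      · rw [fin3_resolve i j k m hij hik hjk h1 h2]
    rw [key 0, key 1, key 2]; exact h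
  · intro h
    refine ⟨fun m => pr i j k m a b c, ?_, ?_, ?_, h⟩
    · simp [pr]
    · simp [pr, hij]
    · simp [pr, hik, hjk]

/-- explicit version of `Xperm` -/
def XpermE (i j k : Fin 3) (pos : Bool) : Set (Fin 7 × Fin 7 × Fin 7) :=
  {t | pr i j k 0 t.1 t.2.1 t.2.2 ∈ U0 ∧ pr i j k 1 t.1 t.2.1 t.2.2 ∈ U1 ∧
       pr i j k 2 t.1 t.2.1 t.2.2 ∈ U2 ∧
       (if pos then (pr i j k 0 t.1 t.2.1 t.2.2, pr i j k 1 t.1 t.2.1 t.2.2,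
          pr i j k 2 t.1 t.2.1 t.2.2) ∈ R
        else (pr i j k 0 t.1 t.2.1 t.2.2, pr i j k 1 t.1 t.2.1 t.2.2,
          pr i j k 2 t.1 t.2.1 t.2.2) ∉ R)}

lemma Xperm_eq {i j k : Fin 3} (hij : i ≠ j) (hik : i ≠ k) (hjk : j ≠ k) (pos : Bool) :
    Xperm i j k pos = XpermE i j k pos :=
  Set.ext fun t =>
    exists_fun_iff hij hik hjk
      (fun u0 u1 u2 => u0 ∈ U0 ∧ u1 ∈ U1 ∧ u2 ∈ U2 ∧
        (if pos then (u0, u1, u2) ∈ R else (u0, u1, u2) ∉ R)) t.1 t.2.1 t.2.2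

instance (i j k : Fin 3) (pos : Bool) : DecidablePred (· ∈ XpermE i j k pos) := fun t =>
  inferInstanceAs (Decidable (_ ∈ U0 ∧ _ ∈ U1 ∧ _ ∈ U2 ∧ if pos then _ ∈ R else _ ∉ R))

instance (i j : Fin 3) : DecidablePred (· ∈ (U i) ×ˢ (U j)) := fun p =>
  inferInstanceAs (Decidable (p.1 ∈ U i ∧ p.2 ∈ U j))

def relAt (i j : Fin 3) (m : Fin 3) : Set (Fin 7 × Fin 7) :=
  if i = 0 ∧ j = 0 then (if m = 0 then S else if m = 1 then Sinv else idOn U0)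
  else if i = 1 ∧ j = 1 then (if m = 0 then diOn U1 else idOn U1)
  else if i = 2 ∧ j = 2 then (if m = 0 then diOn U2 else idOn U2)
  else (U i) ×ˢ (U j)

def sz (i j : Fin 3) : ℕ :=
  if i = 0 ∧ j = 0 then 3 else if (i = 1 ∧ j = 1) ∨ (i = 2 ∧ j = 2) then 2 else 1

instance (i j m : Fin 3) : DecidablePred (· ∈ relAt i j m) := fun p => by
  unfold relAt
  split_ifs <;> infer_instance

instance (i j k : Fin 3) (m n : Fin 3) :
    DecidablePred (· ∈ Xrel i j k (relAt i j m) (relAt j k n)) := fun t =>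
  inferInstanceAs (Decidable (_ ∈ U i ∧ _ ∈ U j ∧ _ ∈ U k ∧ _ ∈ relAt i j m ∧ _ ∈ relAt j k n))

lemma relAt_mem (i j m : Fin 3) (hm : (m : ℕ) < sz i j) : relAt i j m ∈ RelFam i j := by
  fin_cases i <;> fin_cases j <;> fin_cases m <;>
    simp_all [relAt, RelFam, sz]

lemma relFam_sur (i j : Fin 3) (e : Set (Fin 7 × Fin 7)) (he : e ∈ RelFam i j) :
    ∃ m : Fin 3, (m : ℕ) < sz i j ∧ relAt i j m = e := by
  fin_cases i <;> fin_cases j <;> simp [RelFam] at he <;>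
    first
      | (rcases he with rfl | rfl | rfl <;>
          first
            | (refine ⟨0, ?_, ?_⟩ <;> first | decide | (simp [relAt]; done))
            | (refine ⟨1, ?_, ?_⟩ <;> first | decide | (simp [relAt]; done))
            | (refine ⟨2, ?_, ?_⟩ <;> first | decide | (simp [relAt]; done)))
      | (rcases he with rfl | rfl <;>
          first
            | (refine ⟨0, ?_, ?_⟩ <;> first | decide | (simp [relAt]; done))
            | (refine ⟨1, ?_, ?_⟩ <;> first | decide | (simp [relAt]; done)))
      | (subst he; refine ⟨0, ?_, ?_⟩ <;> first | decide | (simp [relAt]; done))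

abbrev I := (Fin 3 × Fin 3 × Fin 3) × Bool × Fin 3 × Fin 3

def g : I → Set (Fin 7 × Fin 7 × Fin 7) := fun a =>
  if a.1.1 ≠ a.1.2.1 ∧ a.1.1 ≠ a.1.2.2 ∧ a.1.2.1 ≠ a.1.2.2 then
    XpermE a.1.1 a.1.2.1 a.1.2.2 a.2.1
  else Xrel a.1.1 a.1.2.1 a.1.2.2 (relAt a.1.1 a.1.2.1 a.2.2.1) (relAt a.1.2.1 a.1.2.2 a.2.2.2)

def valid : I → Prop := fun a =>
  if a.1.1 ≠ a.1.2.1 ∧ a.1.1 ≠ a.1.2.2 ∧ a.1.2.1 ≠ a.1.2.2 then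
    a.2.2.1 = 0 ∧ a.2.2.2 = 0
  else a.2.1 = true ∧ (a.2.2.1 : ℕ) < sz a.1.1 a.1.2.1 ∧ (a.2.2.2 : ℕ) < sz a.1.2.1 a.1.2.2

instance : DecidablePred valid := fun a => by
  unfold valid; split_ifs <;> infer_instance

instance (a : I) : DecidablePred (· ∈ g a) := fun t => by
  unfold g; split_ifs <;> infer_instance

lemma memB (X : Set (Fin 7 × Fin 7 × Fin 7)) : X ∈ B ↔ ∃ a, valid a ∧ X = g a := by
  constructor
  · rintro (⟨i, j, k, hd, pos, rfl⟩ | ⟨i, j, k, hnd, e0, he0, e1, he1, rfl⟩)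
    · exact ⟨((i, j, k), (pos, 0, 0)), by simp [valid, hd],
        by simp only [g, if_pos hd]; exact Xperm_eq hd.1 hd.2.1 hd.2.2 pos⟩
    · obtain ⟨m, hm, rfl⟩ := relFam_sur i j e0 he0
      obtain ⟨n, hn, rfl⟩ := relFam_sur j k e1 he1
      refine ⟨((i, j, k), (true, m, n)), ?_, by simp only [g, if_neg hnd]⟩
      unfold valid
      rw [if_neg hnd]
      exact ⟨rfl, hm, hn⟩
  · rintro ⟨⟨⟨i, j, k⟩, pos, m, n⟩, hv, rfl⟩
    by_cases hd : i ≠ j ∧ i ≠ k ∧ j ≠ k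
    · left
      exact ⟨i, j, k, hd, pos, by rw [g, if_pos hd, Xperm_eq hd.1 hd.2.1 hd.2.2]⟩
    · right
      simp only [valid, if_neg hd] at hv
      exact ⟨i, j, k, hd, relAt i j m, relAt_mem i j m hv.2.1,
        relAt j k n, relAt_mem j k n hv.2.2, by rw [g, if_neg hd]⟩


/-- which `U` a value belongs to -/
def w (x : Fin 7) : Fin 3 := if x.val ≤ 2 then 0 else if x.val ≤ 4 then 1 else 2

/-- index of the relation in `RelFam i j` containing `(x, y)` -/
def ridx (i j : Fin 3) (x y : Fin 7) : Fin 3 :=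
  if i = 0 ∧ j = 0 then (if (x, y) ∈ S then 0 else if (x, y) ∈ Sinv then 1 else 2)
  else if i = j then (if x = y then 1 else 0)
  else 0

/-- the coordinate of `t` lying in `U m` (when the pattern is a permutation) -/
def sel (m : Fin 3) (t : Fin 7 × Fin 7 × Fin 7) : Fin 7 :=
  if w t.1 = m then t.1 else if w t.2.1 = m then t.2.1 else t.2.2

/-- classifier: the index of the unique block containing `t` -/
def cl (t : Fin 7 × Fin 7 × Fin 7) : I :=
  let i := w t.1; let j := w t.2.1; let k := w t.2.2
  if i ≠ j ∧ i ≠ k ∧ j ≠ k then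
    ((i, j, k), (decide ((sel 0 t, sel 1 t, sel 2 t) ∈ R), 0, 0))
  else ((i, j, k), (true, ridx i j t.1 t.2.1, ridx j k t.2.1 t.2.2))

set_option maxRecDepth 4000 in
lemma F2 : ∀ a b c : Fin 7, valid (cl (a, b, c)) := by decide

set_option maxRecDepth 4000 in
lemma F3 : ∀ i j k : Fin 3, ∀ pos : Bool, ∀ m n : Fin 3,
    valid ((i,j,k),(pos,m,n)) → ∃ a b c : Fin 7, cl (a,b,c) = ((i,j,k),(pos,m,n)) := by decide

set_option maxRecDepth 8000 in
set_option maxHeartbeats 8000000 in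
lemma F1 : ∀ i j k : Fin 3, ∀ pos : Bool, ∀ m n : Fin 3,
    valid ((i,j,k),(pos,m,n)) → ∀ a b c : Fin 7,
      ((a,b,c) ∈ g ((i,j,k),(pos,m,n)) ↔ cl (a,b,c) = ((i,j,k),(pos,m,n))) := by decide

theorem stmt_11 :
    (∀ X ∈ B, X.Nonempty) ∧
    (∀ X ∈ B, ∀ Y ∈ B, X ≠ Y → Disjoint X Y) ∧
    ⋃₀ B = (Set.univ : Set (Fin 7 × Fin 7 × Fin 7)) := by
  refine ⟨?_, ?_, ?_⟩
  · intro X hX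
    obtain ⟨⟨⟨i, j, k⟩, pos, m, n⟩, hv, rfl⟩ := (memB X).1 hX
    obtain ⟨a, b, c, hc⟩ := F3 i j k pos m n hv
    exact ⟨(a, b, c), (F1 i j k pos m n hv a b c).2 hc⟩
  · intro X hX Y hY hne
    obtain ⟨⟨⟨i, j, k⟩, pos, m, n⟩, hv, rfl⟩ := (memB X).1 hX
    obtain ⟨⟨⟨i', j', k'⟩, pos', m', n'⟩, hv', rfl⟩ := (memB Y).1 hY
    rw [Set.disjoint_left]
    rintro ⟨a, b, c⟩ ht ht'
    exact hne (congrArg g (((F1 i j k pos m n hv a b c).1 ht).symm.trans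
      ((F1 i' j' k' pos' m' n' hv' a b c).1 ht')))
  · ext ⟨a, b, c⟩
    simp only [Set.mem_sUnion, Set.mem_univ, iff_true]
    have hv := F2 a b c
    rcases hcl : cl (a, b, c) with ⟨⟨i, j, k⟩, pos, m, n⟩
    rw [hcl] at hv
    exact ⟨g ((i, j, k), (pos, m, n)), (memB _).2 ⟨_, hv, rfl⟩,
      (F1 i j k pos m n hv a b c).2 hcl⟩
end

section
/- With M = Fin 7, U0 = {0,1,2}, and B the partition of M³ from the paper, every block X ∈ B satisfies: either U0 ⊆ dom(X) or U0 ∩ dom(X) = ∅, where dom(X) = {a : ∃b c, (a,b,c) ∈ X}. Consequently every union of blocks has a first-projection that either contains all of U0 or is disjoint from U0. -/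
/-- First projection (domain) of a ternary relation. -/
def dom (X : Set (Fin 7 × Fin 7 × Fin 7)) : Set (Fin 7) := {a | ∃ b c, (a, b, c) ∈ X}


section Aux

instance inst_s15 : DecidablePred (· ∈ U0) := fun a =>
  decidable_of_iff (a = 0 ∨ a = 1 ∨ a = 2) (by simp [U0])
instance inst_s15_2 : DecidablePred (· ∈ U1) := fun a =>
  decidable_of_iff (a = 3 ∨ a = 4) (by simp [U1])
instance inst_s15_3 : DecidablePred (· ∈ U2) := fun a =>
  decidable_of_iff (a = 5 ∨ a = 6) (by simp [U2])
instance inst_s15_4 : DecidablePred (· ∈ S) := fun p =>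
  decidable_of_iff (p = (0,1) ∨ p = (1,2) ∨ p = (2,0)) (by simp [S])
instance inst_s15_5 : DecidablePred (· ∈ Sinv) := fun p =>
  decidable_of_iff ((p.2, p.1) ∈ S) Iff.rfl
instance inst_s15_6 : DecidablePred (· ∈ R) := fun p =>
  decidable_of_iff (p.1 ∈ U0 ∧ p.2.1 ∈ U1 ∧ p.2.2 ∈ U2 ∧
    ((p.1 = 0 ∧ Even ((p.2.1 : ℕ) + (p.2.2 : ℕ))) ∨
     ((p.1 = 1 ∨ p.1 = 2) ∧ Odd ((p.2.1 : ℕ) + (p.2.2 : ℕ))))) (by simp [R])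
instance inst_s15_7 (V : Set (Fin 7)) [DecidablePred (· ∈ V)] : DecidablePred (· ∈ idOn V) :=
  fun p => decidable_of_iff (p.1 ∈ V ∧ p.1 = p.2) Iff.rfl
instance inst_s15_8 (V : Set (Fin 7)) [DecidablePred (· ∈ V)] : DecidablePred (· ∈ diOn V) :=
  fun p => decidable_of_iff (p.1 ∈ V ∧ p.2 ∈ V ∧ p.1 ≠ p.2) Iff.rfl

instance instDecU : (i : Fin 3) → DecidablePred (· ∈ U i)
  | 0 => inferInstanceAs (DecidablePred (· ∈ U0))
  | 1 => inferInstanceAs (DecidablePred (· ∈ U1))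
  | 2 => inferInstanceAs (DecidablePred (· ∈ U2))

instance (V W : Set (Fin 7)) [DecidablePred (· ∈ V)] [DecidablePred (· ∈ W)] :
    DecidablePred (· ∈ V ×ˢ W) :=
  fun p => decidable_of_iff (p.1 ∈ V ∧ p.2 ∈ W) (by simp [Set.mem_prod])

instance (i j k : Fin 3) (e0 e1 : Set (Fin 7 × Fin 7))
    [DecidablePred (· ∈ e0)] [DecidablePred (· ∈ e1)] :
    DecidablePred (· ∈ Xrel i j k e0 e1) := fun t =>
  decidable_of_iff (t.1 ∈ U i ∧ t.2.1 ∈ U j ∧ t.2.2 ∈ U k ∧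
    (t.1, t.2.1) ∈ e0 ∧ (t.2.1, t.2.2) ∈ e1) Iff.rfl

instance (X : Set (Fin 7 × Fin 7 × Fin 7)) [DecidablePred (· ∈ X)] :
    DecidablePred (· ∈ dom X) := fun a =>
  decidable_of_iff (∃ b c, (a, b, c) ∈ X) Iff.rfl

lemma mem_dom_xperm (i j k : Fin 3) (pos : Bool) (a : Fin 7) :
    a ∈ dom (Xperm i j k pos) ↔ ∃ u : Fin 3 → Fin 7, u i = a ∧
      u 0 ∈ U0 ∧ u 1 ∈ U1 ∧ u 2 ∈ U2 ∧
      (if pos then (u 0, u 1, u 2) ∈ R else (u 0, u 1, u 2) ∉ R) := by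
  constructor
  · rintro ⟨b, c, u, h1, _, _, h4, h5, h6, h7⟩
    exact ⟨u, h1, h4, h5, h6, h7⟩
  · rintro ⟨u, h1, h4, h5, h6, h7⟩
    exact ⟨u j, u k, u, h1, rfl, rfl, h4, h5, h6, h7⟩

lemma blocks_key : ∀ X ∈ B, U0 ⊆ dom X ∨ U0 ∩ dom X = ∅ := by
  rintro X (⟨i, j, k, ⟨hij, hik, hjk⟩, pos, rfl⟩ | ⟨i, j, k, h, e0, he0, e1, he1, rfl⟩)
  · fin_cases i
    · left
      intro a ha
      rw [mem_dom_xperm]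
      have ha' : a = 0 ∨ a = 1 ∨ a = 2 := by simpa [U0] using ha
      cases pos <;> rcases ha' with rfl | rfl | rfl
      · exact ⟨![0, 3, 6], by decide⟩
      · exact ⟨![1, 4, 6], by decide⟩
      · exact ⟨![2, 4, 6], by decide⟩
      · exact ⟨![0, 4, 6], by decide⟩
      · exact ⟨![1, 3, 6], by decide⟩
      · exact ⟨![2, 3, 6], by decide⟩
    · right
      ext a
      simp only [Set.mem_inter_iff, Set.mem_empty_iff_false, iff_false, not_and]
      intro ha hd
      rw [mem_dom_xperm] at hd
      obtain ⟨u, rfl, h4, h5, h6, -⟩ := hd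
      simp [U0, U1] at ha h5
      rcases h5 with h | h <;> simp [h] at ha
    · right
      ext a
      simp only [Set.mem_inter_iff, Set.mem_empty_iff_false, iff_false, not_and]
      intro ha hd
      rw [mem_dom_xperm] at hd
      obtain ⟨u, rfl, h4, h5, h6, -⟩ := hd
      simp [U0, U2] at ha h6
      rcases h6 with h | h <;> simp [h] at ha
  · fin_cases i <;> fin_cases j <;> fin_cases k <;> simp_all [RelFam] <;>
      (try rcases he0 with rfl | rfl | rfl) <;> (try rcases he0 with rfl | rfl) <;>
      (try subst he0) <;>
      (try rcases he1 with rfl | rfl | rfl) <;> (try rcases he1 with rfl | rfl) <;>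
      (try subst he1) <;>
      first
      | (left; intro a ha;
         have ha' : a = 0 ∨ a = 1 ∨ a = 2 := by simpa [U0] using ha;
         rcases ha' with rfl | rfl | rfl <;> decide)
      | (right; ext a;
         simp only [Set.mem_inter_iff, Set.mem_empty_iff_false, iff_false, not_and];
         revert a; decide)

end Aux

theorem stmt_15 :
    (∀ X ∈ B, U0 ⊆ dom X ∨ U0 ∩ dom X = ∅) ∧
    (∀ Y ⊆ B, U0 ⊆ dom (⋃₀ Y) ∨ U0 ∩ dom (⋃₀ Y) = ∅) := by
  constructor
  · exact blocks_key
  · intro Y hY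
    by_cases h : ∃ X ∈ Y, U0 ⊆ dom X
    · obtain ⟨X, hXY, hX⟩ := h
      left
      intro a ha
      obtain ⟨b, c, hb⟩ := hX ha
      exact ⟨b, c, X, hXY, hb⟩
    · right
      ext a
      simp only [Set.mem_inter_iff, Set.mem_empty_iff_false, iff_false, not_and]
      rintro ha ⟨b, c, hbc⟩
      rw [Set.mem_sUnion] at hbc
      obtain ⟨X, hXY, hmem⟩ := hbc
      rcases blocks_key X (hY hXY) with hsub | hemp
      · exact h ⟨X, hXY, hsub⟩
      · exact (Set.eq_empty_iff_forall_notMem.mp hemp a) ⟨ha, b, c, hmem⟩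
end

section
/- Let n ≥ 3, let U0 = {0,1,2}, U1 = ⋯ = U_{n−1} = {0,1}, T = U0 × U1 × ⋯ × U_{n−1}, and define R = {s ∈ T : (s0 = 0 ∧ s1 + ⋯ + s_{n−1} even) ∨ (s0 ≠ 0 ∧ s1 + ⋯ + s_{n−1} odd)}. Then R satisfies big(R): for each coordinate i < n, the projection of R omitting coordinate i equals the projection of T \ R omitting coordinate i. -/
/-- The index `0` of `Fin n`, for `n ≥ 3`. -/
def z (n : ℕ) (hn : 3 ≤ n) : Fin n := ⟨0, by omega⟩

/-- The rectangular hull `T = U0 × U1 × ⋯ × U_{n-1}` with `U0 = {0,1,2}` and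
`U_i = {0,1}` for `1 ≤ i < n`. -/
def Trect (n : ℕ) (hn : 3 ≤ n) : Set (Fin n → ℕ) :=
  {s | s (z n hn) < 3 ∧ ∀ i, i ≠ z n hn → s i < 2}

/-- The canonical parity relation in dimension `n`. -/
def Rn (n : ℕ) (hn : 3 ≤ n) : Set (Fin n → ℕ) :=
  {s | s ∈ Trect n hn ∧
    ((s (z n hn) = 0 ∧ Even (∑ i ∈ Finset.univ.erase (z n hn), s i)) ∨
     (s (z n hn) ≠ 0 ∧ Odd (∑ i ∈ Finset.univ.erase (z n hn), s i)))}

lemma flipMem (n : ℕ) (hn : 3 ≤ n) (i : Fin n) (s' : Fin n → ℕ) (hT : s' ∈ Trect n hn) :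
    ∃ s'', s'' ∈ Trect n hn ∧ (∀ j, j ≠ i → s'' j = s' j) ∧
      (s'' ∈ Rn n hn ↔ s' ∉ Rn n hn) := by
  by_cases hi : i = z n hn
  · subst hi
    refine ⟨Function.update s' (z n hn) (if s' (z n hn) = 0 then 1 else 0), ?_, ?_, ?_⟩
    · constructor
      · simp only [Function.update_self]; split <;> omega
      · intro j hj; rw [Function.update_of_ne hj]; exact hT.2 j hj
    · intro j hj; exact Function.update_of_ne hj _ _
    · have hsum : ∑ k ∈ Finset.univ.erase (z n hn), Function.update s' (z n hn) (if s' (z n hn) = 0 then 1 else 0) k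
          = ∑ k ∈ Finset.univ.erase (z n hn), s' k := by
        apply Finset.sum_congr rfl
        intro k hk
        exact Function.update_of_ne (Finset.ne_of_mem_erase hk) _ _
      simp only [Rn, Set.mem_setOf_eq, hsum, Function.update_self]
      constructor
      · rintro ⟨-, h⟩ ⟨-, h'⟩
        rcases h with ⟨h1, h2⟩ | ⟨h1, h2⟩ <;> rcases h' with ⟨h1', h2'⟩ | ⟨h1', h2'⟩ <;>
          simp_all [Nat.even_iff, Nat.odd_iff] <;> omega
      · intro h
        refine ⟨⟨by simp only [Function.update_self]; split <;> omega, fun j hj => by rw [Function.update_of_ne hj]; exact hT.2 j hj⟩, ?_⟩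
        by_cases he : Even (∑ k ∈ Finset.univ.erase (z n hn), s' k)
        ·
          -- s' ∈ T, so s' ∉ R means ¬(s'i=0∧even) ∧ ¬(s'i≠0∧odd); even → s'i≠0, so update val = 0
          have : s' (z n hn) ≠ 0 := by
            intro h0; exact h ⟨hT, Or.inl ⟨h0, he⟩⟩
          simp [this, he]
        · have hodd : Odd (∑ k ∈ Finset.univ.erase (z n hn), s' k) := Nat.odd_iff.2 (by
            rw [Nat.even_iff] at he; omega)
          have : s' (z n hn) = 0 := by
            by_contra h0; exact h ⟨hT, Or.inr ⟨h0, hodd⟩⟩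
          simp [this, hodd, Nat.not_even_iff_odd.2 hodd]
  · have hi2 : s' i < 2 := hT.2 i hi
    have hmem : i ∈ Finset.univ.erase (z n hn) := Finset.mem_erase.2 ⟨hi, Finset.mem_univ i⟩
    refine ⟨Function.update s' i (1 - s' i), ?_, ?_, ?_⟩
    · constructor
      · rw [Function.update_of_ne (fun h => hi h.symm)]
        · exact hT.1
      · intro j hj
        by_cases hji : j = i
        · subst hji; simp only [Function.update_self]; omega
        · rw [Function.update_of_ne hji]; exact hT.2 j hj
    · intro j hj; exact Function.update_of_ne hj _ _
    · have hz : Function.update s' i (1 - s' i) (z n hn) = s' (z n hn) :=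
        Function.update_of_ne (fun h => hi h.symm) _ _
      have hsum : ∑ k ∈ Finset.univ.erase (z n hn), Function.update s' i (1 - s' i) k
          = (1 - s' i) + ∑ k ∈ (Finset.univ.erase (z n hn)).erase i, s' k := by
        rw [← Finset.add_sum_erase _ _ hmem]
        congr 1
        · simp
        · apply Finset.sum_congr rfl
          intro k hk
          exact Function.update_of_ne (Finset.ne_of_mem_erase hk) _ _
      have hsum' : ∑ k ∈ Finset.univ.erase (z n hn), s' k
          = s' i + ∑ k ∈ (Finset.univ.erase (z n hn)).erase i, s' k :=
        (Finset.add_sum_erase _ _ hmem).symm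
      have hTT : Function.update s' i (1 - s' i) ∈ Trect n hn := by
        constructor
        · rw [hz]; exact hT.1
        · intro j hj
          by_cases hji : j = i
          · subst hji; simp only [Function.update_self]; omega
          · rw [Function.update_of_ne hji]; exact hT.2 j hj
      simp only [Rn, Set.mem_setOf_eq, hz, hsum, hsum']
      constructor
      · rintro ⟨-, h⟩ ⟨-, h'⟩
        rcases h with ⟨h1, h2⟩ | ⟨h1, h2⟩ <;> rcases h' with ⟨h1', h2'⟩ | ⟨h1', h2'⟩ <;>
          simp_all [Nat.even_iff, Nat.odd_iff] <;> omega
      · intro h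
        refine ⟨hTT, ?_⟩
        have hnot : ¬((s' (z n hn) = 0 ∧ Even (s' i + ∑ k ∈ (Finset.univ.erase (z n hn)).erase i, s' k)) ∨
            (s' (z n hn) ≠ 0 ∧ Odd (s' i + ∑ k ∈ (Finset.univ.erase (z n hn)).erase i, s' k))) := by
          intro hc; exact h ⟨hT, hc⟩
        by_cases h0 : s' (z n hn) = 0
        · left
          refine ⟨h0, ?_⟩
          have : ¬ Even (s' i + ∑ k ∈ (Finset.univ.erase (z n hn)).erase i, s' k) := by
            intro he; exact hnot (Or.inl ⟨h0, he⟩)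
          rw [Nat.even_iff] at this ⊢; omega
        · right
          refine ⟨h0, ?_⟩
          have : ¬ Odd (s' i + ∑ k ∈ (Finset.univ.erase (z n hn)).erase i, s' k) := by
            intro he; exact hnot (Or.inr ⟨h0, he⟩)
          rw [Nat.odd_iff] at this ⊢; omega

theorem stmt_18 (n : ℕ) (hn : 3 ≤ n) :
    ∀ i : Fin n, ∀ s : Fin n → ℕ,
      (∃ s' ∈ Rn n hn, ∀ j, j ≠ i → s' j = s j) ↔
      (∃ s' ∈ Trect n hn \ Rn n hn, ∀ j, j ≠ i → s' j = s j) := by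
  intro i s
  constructor
  · rintro ⟨s', hR, hag⟩
    obtain ⟨s'', hT'', hag'', hiff⟩ := flipMem n hn i s' hR.1
    exact ⟨s'', ⟨hT'', fun hc => (hiff.1 hc) hR⟩, fun j hj => (hag'' j hj).trans (hag j hj)⟩
  · rintro ⟨s', ⟨hT, hnR⟩, hag⟩
    obtain ⟨s'', hT'', hag'', hiff⟩ := flipMem n hn i s' hT
    exact ⟨s'', hiff.mpr hnR, fun j hj => (hag'' j hj).trans (hag j hj)⟩
end
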